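/- arXiv:1403.7886 — 5 statements merged into one kernel-verified Lean document; each statement's English description precedes it below -/
import Mathlib

section
/- Let μ be a mixed stopping time on (Ω,F,P) with filtration (F_t)_{t∈[0,T]}. Then the push-forward measure δ_μ of P ⊗ λ under (ω,r) ↦ (ω,μ(ω,r)) is a distribution stopping time: its marginal on Ω equals P, and for every t ∈ [0,T] the Radon–Nikodym derivative of A ↦ δ_μ(A × [0,t]) with respect to P is F_t-measurable. -/
/-!
By Tonelli, `δ_μ(A × [0,t]) = ∫_A λ{r : μ(ω,r) ≤ t} dP(ω)`, so `δ^t` has density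
`g_t(ω) = λ{r : μ(ω,r) ≤ t}` with respect to `P`. Since `{μ ≤ t}` is `F_t ⊗ B`-measurable, the
measure of its `ω`-sections is `F_t`-measurable in `ω`, so `g_t` is the required version of the
Radon–Nikodym derivative.
-/

open MeasureTheory Set

noncomputable section

namespace StopEquiv

variable {Ω : Type*} [MeasurableSpace Ω]

/-- Lebesgue measure on the unit interval `[0,1]`, as a measure on `ℝ`. -/
def lam : Measure ℝ := volume.restrict (Icc (0:ℝ) 1)

/-- The filtration `F` on the time interval `[0,T]` satisfies the usual conditions
(together with monotonicity and being a sub-σ-algebra of the ambient one):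
right continuity and `F 0` containing all `P`-null sets. -/
def UsualConditions (P : Measure Ω) (F : ℝ → MeasurableSpace Ω) (T : ℝ) : Prop :=
  (∀ s t : ℝ, s ≤ t → F s ≤ F t) ∧
  (∀ t : ℝ, F t ≤ (inferInstance : MeasurableSpace Ω)) ∧
  (∀ t ∈ Ico (0:ℝ) T, F t = ⨅ s ∈ Ioc t T, F s) ∧
  (∀ N : Set Ω, (∃ M, MeasurableSet M ∧ N ⊆ M ∧ P M = 0) → MeasurableSet[F 0] N)

/-- A pure stopping time with values in `[0,T]`. -/
def IsPureST (F : ℝ → MeasurableSpace Ω) (T : ℝ) (σ : Ω → ℝ) : Prop :=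
  (∀ ω, σ ω ∈ Icc 0 T) ∧ ∀ t ∈ Icc (0:ℝ) T, MeasurableSet[F t] {ω | σ ω ≤ t}

/-- A mixed stopping time (Definition of Baxter–Chacon): `{(ω,r) : μ(ω,r) ≤ t}` is
`F_t ⊗ B(ℝ)`-measurable for every `t ∈ [0,T]`. -/
def IsMixedST (F : ℝ → MeasurableSpace Ω) (T : ℝ) (μ : Ω → ℝ → ℝ) : Prop :=
  (∀ ω r, μ ω r ∈ Icc 0 T) ∧
  ∀ t ∈ Icc (0:ℝ) T,
    MeasurableSet[(F t).prod (borel ℝ)] {p : Ω × ℝ | μ p.1 p.2 ≤ t}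

/-- The distribution stopping time `δ_μ` induced by a mixed stopping time: the
push-forward of `P ⊗ λ` under `(ω,r) ↦ (ω, μ(ω,r))`. -/
def mixedDist (P : Measure Ω) (μ : Ω → ℝ → ℝ) : Measure (Ω × ℝ) :=
  (P.prod lam).map (fun p => (p.1, μ p.1 p.2))

/-- The section measure `δ^t(A) := δ(A × [0,t])`. -/
def secMeas (δ : Measure (Ω × ℝ)) (t : ℝ) : Measure Ω :=
  (δ.restrict (univ ×ˢ Icc 0 t)).map Prod.fst

/-- A randomized stopping time: an adapted `[0,1]`-valued process with
nondecreasing right-continuous paths and `ρ_T ≡ 1`. -/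
def IsRandomizedST (F : ℝ → MeasurableSpace Ω) (T : ℝ) (ρ : ℝ → Ω → ℝ) : Prop :=
  (∀ t ∈ Icc (0:ℝ) T, Measurable[F t] (ρ t)) ∧
  (∀ t ∈ Icc (0:ℝ) T, ∀ ω, ρ t ω ∈ Icc (0:ℝ) 1) ∧
  (∀ ω, MonotoneOn (fun t => ρ t ω) (Icc 0 T)) ∧
  (∀ ω, ∀ t ∈ Ico (0:ℝ) T, ContinuousWithinAt (fun s => ρ s ω) (Icc t T) t) ∧
  (∀ ω, ρ T ω = 1)

/-- `δ` is the distribution stopping time `δ_ρ` induced by the randomized stopping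
time `ρ`, i.e. `δ(A × [0,t]) = ∫_A ρ_t dP` for all `A ∈ F` and `t ∈ [0,T]`. -/
def IsRandDist (P : Measure Ω) (T : ℝ) (ρ : ℝ → Ω → ℝ) (δ : Measure (Ω × ℝ)) : Prop :=
  ∀ A : Set Ω, MeasurableSet A → ∀ t ∈ Icc (0:ℝ) T,
    δ (A ×ˢ Icc 0 t) = ∫⁻ ω in A, ENNReal.ofReal (ρ t ω) ∂P

/-- A distribution stopping time: a probability measure on `Ω × [0,T]` whose
`Ω`-marginal is `P` and such that the Radon–Nikodym derivative of `δ^t` w.r.t. `P`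
is `F_t`-measurable (has an `F_t`-measurable version) for every `t ∈ [0,T]`. -/
def IsDistST (P : Measure Ω) (F : ℝ → MeasurableSpace Ω) (T : ℝ)
    (δ : Measure (Ω × ℝ)) : Prop :=
  IsProbabilityMeasure δ ∧
  δ.map Prod.fst = P ∧
  δ {p : Ω × ℝ | p.2 ∈ Icc 0 T}ᶜ = 0 ∧
  ∀ t ∈ Icc (0:ℝ) T, ∃ g : Ω → ENNReal,
    Measurable[F t] g ∧ g =ᵐ[P] (secMeas δ t).rnDeriv P

/-- The mixed stopping time `μ(ω,r) = min{t ∈ [0,T] : ρ_t(ω) ≥ r}` built from a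
randomized stopping time `ρ`. -/
def candidateMixed (T : ℝ) (ρ : ℝ → Ω → ℝ) : Ω → ℝ → ℝ :=
  fun ω r => sInf {t | t ∈ Icc 0 T ∧ r ≤ ρ t ω}

/-- The payoff of a stopping game at the pair of stopping times `(t,s)`:
`X_t` if Player 1 stops first, `Y_s` if Player 2 stops first, `Z_t` if they stop
simultaneously. -/
def gamePayoff (X Y Z : Ω × ℝ → ℝ) (ω : Ω) (t s : ℝ) : ℝ :=
  if t < s then X (ω, t) else if s < t then Y (ω, s) else Z (ω, t)

instance lam.isProbabilityMeasure : IsProbabilityMeasure lam :=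
  ⟨by simp [lam, Real.volume_Icc]⟩

lemma _root_.MeasurableSpace.prod_mono_left {α β : Type*} {m₁ m₂ : MeasurableSpace α}
    (h : m₁ ≤ m₂) (mβ : MeasurableSpace β) : m₁.prod mβ ≤ m₂.prod mβ :=
  sup_le_sup_right (MeasurableSpace.comap_mono h) _

lemma measurable_of_measurableSet_le_of_mem_Icc {α β : Type*} [MeasurableSpace α]
    [LinearOrder β] [TopologicalSpace β] [OrderTopology β] [SecondCountableTopology β]
    [MeasurableSpace β] [BorelSpace β] {f : α → β} {a b : β} (hf : ∀ x, f x ∈ Icc a b)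
    (h : ∀ t ∈ Icc a b, MeasurableSet {x | f x ≤ t}) : Measurable f := by
  refine measurable_of_Iic fun t => ?_
  rcases lt_or_ge t a with hta | hat
  · convert MeasurableSet.empty
    exact eq_empty_of_forall_notMem fun x hx => (hta.trans_le (hf x).1).not_ge hx
  rcases le_or_gt t b with htb | hbt
  · exact h t ⟨hat, htb⟩
  · convert MeasurableSet.univ
    exact eq_univ_of_forall fun x => (hf x).2.trans hbt.le

section MixedStoppingTime

variable {F : ℝ → MeasurableSpace Ω} {T : ℝ} {μ : Ω → ℝ → ℝ}

lemma IsMixedST.measurableSet_le (hle : ∀ t, F t ≤ ‹MeasurableSpace Ω›)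
    (hμ : IsMixedST F T μ) {t : ℝ} (ht : t ∈ Icc 0 T) :
    MeasurableSet {p : Ω × ℝ | μ p.1 p.2 ≤ t} := by
  have h := hμ.2 t ht
  rw [← BorelSpace.measurable_eq] at h
  exact MeasurableSpace.prod_mono_left (hle t) _ _ h

lemma IsMixedST.measurable_uncurry (hle : ∀ t, F t ≤ ‹MeasurableSpace Ω›)
    (hμ : IsMixedST F T μ) : Measurable (fun p : Ω × ℝ => μ p.1 p.2) :=
  measurable_of_measurableSet_le_of_mem_Icc (fun p => hμ.1 p.1 p.2)
    fun _ ht => hμ.measurableSet_le hle ht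

end MixedStoppingTime

lemma map_fst_restrict_map_prodMk {β γ : Type*} [MeasurableSpace β] [MeasurableSpace γ]
    (P : Measure Ω) [SFinite P] (ν : Measure β) [SFinite ν] {f : Ω × β → γ}
    (hf : Measurable f) {s : Set γ} (hs : MeasurableSet s) :
    (((P.prod ν).map (fun p => (p.1, f p))).restrict (univ ×ˢ s)).map Prod.fst =
      P.withDensity (fun ω => ν (Prod.mk ω ⁻¹' (f ⁻¹' s))) := by
  have hg : Measurable (fun p : Ω × β => (p.1, f p)) := measurable_fst.prodMk hf
  ext A hA
  have hpre : (fun p : Ω × β => (p.1, f p)) ⁻¹' (Prod.fst ⁻¹' A ∩ univ ×ˢ s) =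
      A ×ˢ univ ∩ f ⁻¹' s := by
    ext p; simp
  rw [Measure.map_apply measurable_fst hA, Measure.restrict_apply (measurable_fst hA),
    Measure.map_apply hg ((measurable_fst hA).inter (MeasurableSet.univ.prod hs)), hpre,
    Measure.prod_apply ((hA.prod MeasurableSet.univ).inter (hf hs)), withDensity_apply _ hA,
    ← lintegral_indicator hA]
  congr 1
  ext ω
  by_cases hω : ω ∈ A <;> simp [hω, preimage]

theorem stmt3_general (P : Measure Ω) [IsProbabilityMeasure P]
    (F : ℝ → MeasurableSpace Ω)
    (hle : ∀ t : ℝ, F t ≤ (inferInstance : MeasurableSpace Ω))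
    (T : ℝ)
    (μ : Ω → ℝ → ℝ) (hμ : IsMixedST F T μ) :
    IsDistST P F T (mixedDist P μ) := by
  have hμm := hμ.measurable_uncurry hle
  have hg : Measurable (fun p : Ω × ℝ => (p.1, μ p.1 p.2)) := measurable_fst.prodMk hμm
  have hprob : IsProbabilityMeasure (mixedDist P μ) :=
    Measure.isProbabilityMeasure_map hg.aemeasurable
  refine ⟨hprob, ?_, ?_, fun t ht => ?_⟩
  · rw [mixedDist, Measure.map_map measurable_fst hg]
    simp [Function.comp_def]
  · have hS : MeasurableSet {p : Ω × ℝ | p.2 ∈ Icc 0 T}ᶜ :=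
      (measurable_snd measurableSet_Icc).compl
    rw [mixedDist, Measure.map_apply hg hS]
    convert measure_empty (μ := P.prod lam)
    exact eq_empty_of_forall_notMem fun p hp => hp (hμ.1 p.1 p.2)
  · have hsub : {p : Ω × ℝ | μ p.1 p.2 ∈ Icc 0 t} = {p | μ p.1 p.2 ≤ t} := by
      ext p; simp [(hμ.1 p.1 p.2).1]
    refine ⟨fun ω => lam (Prod.mk ω ⁻¹' {p : Ω × ℝ | μ p.1 p.2 ∈ Icc 0 t}), ?_, ?_⟩
    · rw [hsub]
      exact @measurable_measure_prodMk_left Ω ℝ (F t) (borel ℝ) lam _ _ (hμ.2 t ht)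
    · rw [secMeas, mixedDist, map_fst_restrict_map_prodMk P lam hμm measurableSet_Icc]
      exact (Measure.rnDeriv_withDensity P
        (measurable_measure_prodMk_left (hμm measurableSet_Icc))).symm

/-- The push-forward `δ_μ` of `P ⊗ λ` under `(ω,r) ↦ (ω,μ(ω,r))` is a
distribution stopping time. -/
theorem stmt3 (P : Measure Ω) [IsProbabilityMeasure P]
    (F : ℝ → MeasurableSpace Ω)
    (hle : ∀ t : ℝ, F t ≤ (inferInstance : MeasurableSpace Ω))
    (T : ℝ) (hT : 0 ≤ T)
    (μ : Ω → ℝ → ℝ) (hμ : IsMixedST F T μ) :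
    IsDistST P F T (mixedDist P μ) :=
  stmt3_general P F hle T μ hμ

end StopEquiv
end
end

section
/- Let μ be a mixed stopping time and ρ a randomized stopping time on (Ω,F,P,(F_t)_{t∈[0,T]}). Then δ_μ = δ_ρ (the distribution stopping times they induce coincide) if and only if for every t ∈ [0,T], ρ_t(ω) = λ({r ∈ [0,1] : μ(ω,r) ≤ t}) for P-almost every ω. -/
open MeasureTheory Set

noncomputable section

namespace StopEquiv

variable {Ω : Type*} [MeasurableSpace Ω]

/-!
By Fubini, `δ_μ(A × [0,t]) = ∫_A λ{r : μ(ω,r) ≤ t} dP`. Hence `δ_μ = δ_ρ` says exactly that the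
measurable functions `ρ_t` and `ω ↦ λ{r : μ(ω,r) ≤ t}` have the same integral over every
measurable `A`, which for a σ-finite `P` is `P`-a.e. equality.
-/

instance : IsProbabilityMeasure lam :=
  ⟨by simp [lam, Real.volume_Icc]⟩

lemma IsMixedST.measurable {F : ℝ → MeasurableSpace Ω}
    (hle : ∀ t : ℝ, F t ≤ (inferInstance : MeasurableSpace Ω))
    {T : ℝ} {μ : Ω → ℝ → ℝ} (hμ : IsMixedST F T μ) :
    Measurable fun p : Ω × ℝ => μ p.1 p.2 := by
  refine measurable_of_Iic fun t => ?_
  rcases lt_or_ge t 0 with ht0 | ht0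
  · convert MeasurableSet.empty
    exact eq_empty_of_forall_notMem fun p hp => (ht0.trans_le (hμ.1 p.1 p.2).1).not_ge hp
  rcases le_or_gt t T with htT | htT
  · have hprod : (F t).prod (borel ℝ) ≤ (inferInstance : MeasurableSpace (Ω × ℝ)) :=
      sup_le_sup (MeasurableSpace.comap_mono (hle t))
        (MeasurableSpace.comap_mono BorelSpace.measurable_eq.ge)
    exact hprod _ (hμ.2 t ⟨ht0, htT⟩)
  · convert MeasurableSet.univ
    exact eq_univ_of_forall fun p => (hμ.1 p.1 p.2).2.trans htT.le

lemma mixedDist_prod_apply (P : Measure Ω) [SFinite P] {μ : Ω → ℝ → ℝ}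
    (hμ : Measurable fun p : Ω × ℝ => μ p.1 p.2) {A : Set Ω} {B : Set ℝ}
    (hA : MeasurableSet A) (hB : MeasurableSet B) :
    mixedDist P μ (A ×ˢ B) = ∫⁻ ω in A, lam (μ ω ⁻¹' B) ∂P := by
  have hS : MeasurableSet ((fun p : Ω × ℝ => μ p.1 p.2) ⁻¹' B) := hμ hB
  have hf : Measurable fun p : Ω × ℝ => (p.1, μ p.1 p.2) := measurable_fst.prodMk hμ
  rw [mixedDist, Measure.map_apply hf (hA.prod hB), mk_preimage_prod,
    ← prod_univ, inter_comm, ← Measure.restrict_apply hS, ← Measure.restrict_prod_eq_prod_univ,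
    Measure.prod_apply hS]
  rfl

theorem stmt5_general (P : Measure Ω) [IsProbabilityMeasure P]
    (F : ℝ → MeasurableSpace Ω)
    (hle : ∀ t : ℝ, F t ≤ (inferInstance : MeasurableSpace Ω))
    (T : ℝ)
    (μ : Ω → ℝ → ℝ) (hμ : IsMixedST F T μ)
    (ρ : ℝ → Ω → ℝ) (hρ : IsRandomizedST F T ρ) :
    IsRandDist P T ρ (mixedDist P μ) ↔
      ∀ t ∈ Icc (0:ℝ) T,
        (fun ω => ENNReal.ofReal (ρ t ω)) =ᵐ[P] fun ω => lam {r | μ ω r ≤ t} := by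
  have hm := hμ.measurable hle
  have hδ : ∀ A, MeasurableSet A → ∀ t,
      mixedDist P μ (A ×ˢ Icc 0 t) = ∫⁻ ω in A, lam {r | μ ω r ≤ t} ∂P := fun A hA t => by
    rw [mixedDist_prod_apply P hm hA measurableSet_Icc]
    exact lintegral_congr fun ω => congrArg lam (ext fun r => and_iff_right (hμ.1 ω r).1)
  refine ⟨fun h t ht => ?_, fun h A hA t ht => ?_⟩
  · have hρt : Measurable fun ω => ENNReal.ofReal (ρ t ω) :=
      ENNReal.measurable_ofReal.comp ((hρ.1 t ht).mono (hle t) le_rfl)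
    refine ae_eq_of_forall_setLIntegral_eq_of_sigmaFinite hρt
      (measurable_measure_prodMk_left (hm measurableSet_Iic)) fun A hA _ => ?_
    rw [← h A hA t ht, hδ A hA]
  · rw [hδ A hA]
    exact (lintegral_congr_ae (ae_restrict_of_ae (h t ht))).symm

/-- A mixed stopping time `μ` and a randomized stopping time `ρ` are equivalent
(`δ_μ = δ_ρ`) if and only if `ρ_t(ω) = λ({r : μ(ω,r) ≤ t})` `P`-a.s., for every
`t ∈ [0,T]`. -/
theorem stmt5 (P : Measure Ω) [IsProbabilityMeasure P]
    (F : ℝ → MeasurableSpace Ω)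
    (hle : ∀ t : ℝ, F t ≤ (inferInstance : MeasurableSpace Ω))
    (T : ℝ) (hT : 0 ≤ T)
    (μ : Ω → ℝ → ℝ) (hμ : IsMixedST F T μ)
    (ρ : ℝ → Ω → ℝ) (hρ : IsRandomizedST F T ρ) :
    IsRandDist P T ρ (mixedDist P μ) ↔
      ∀ t ∈ Icc (0:ℝ) T,
        (fun ω => ENNReal.ofReal (ρ t ω)) =ᵐ[P] fun ω => lam {r | μ ω r ≤ t} :=
  stmt5_general P F hle T μ hμ ρ hρ

end StopEquiv
end
end

section
/- Let δ be a distribution stopping time on Ω × [0,T]. Then there exists a randomized stopping time ρ with δ_ρ = δ. Explicitly, if ν : Ω → P([0,T]) is the disintegration of δ over its Ω-marginal P, then ρ_t(ω) := ν_ω([0,t]) defines an adapted, right-continuous, nondecreasing [0,1]-valued process with ρ_T = 1 and δ_ρ = δ. -/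
open MeasureTheory Set

noncomputable section

namespace StopEquiv

variable {Ω : Type*} [MeasurableSpace Ω]

/-! Disintegrate `δ = P ⊗ ν` and put `ρ_t(ω) = ν_ω([0,t])`. The paths are distribution functions,
hence nondecreasing and right-continuous. Since `δ^t` has density `ω ↦ ν_ω([0,t])` with respect to
`P`, the hypothesis on `δ` says that `ρ_t` agrees `P`-a.e. with an `F_t`-measurable function, and
the usual conditions turn this into `F_t`-measurability of `ρ_t` itself. -/

open Filter Topology ProbabilityTheory

lemma UsualConditions.measurableSet_of_null {P : Measure Ω} {F : ℝ → MeasurableSpace Ω} {T : ℝ}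
    (hUC : UsualConditions P F T) {t : ℝ} (ht : 0 ≤ t) {N : Set Ω} (hN : P N = 0) :
    MeasurableSet[F t] N :=
  let ⟨M, hNM, hM, hM0⟩ := exists_measurable_superset_of_null hN
  hUC.1 0 t ht N (hUC.2.2.2 N ⟨M, hM, hNM, hM0⟩)

lemma UsualConditions.measurable_of_ae_eq {P : Measure Ω} {F : ℝ → MeasurableSpace Ω} {T : ℝ}
    (hUC : UsualConditions P F T) {t : ℝ} (ht : 0 ≤ t) {β : Type*} [MeasurableSpace β]
    {f g : Ω → β} (hg : Measurable[F t] g) (hfg : f =ᵐ[P] g) : Measurable[F t] f := by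
  obtain ⟨M, hM, -, hM0⟩ := exists_measurable_superset_of_null (ae_iff.1 hfg)
  intro B hB
  have hsplit : f ⁻¹' B = (g ⁻¹' B ∩ Mᶜ) ∪ (f ⁻¹' B ∩ M) := by
    ext ω
    by_cases hω : ω ∈ M
    · simp [hω]
    · have hfgω : f ω = g ω := not_not.1 fun h => hω (hM h)
      simp [hω, hfgω]
  rw [hsplit]
  exact ((hg hB).inter (hUC.measurableSet_of_null ht hM0).compl).union
    (hUC.measurableSet_of_null ht (measure_mono_null inter_subset_right hM0))

lemma continuousWithinAt_measure_Icc (ν : Measure ℝ) [IsFiniteMeasure ν] (a t : ℝ) :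
    ContinuousWithinAt (fun s => ν (Icc a s)) (Ici t) t := by
  have hlim : Tendsto (fun s => ν (Icc a s)) (𝓝[>] t) (𝓝 (ν (⋂ s > t, Icc a s))) :=
    tendsto_measure_biInter_gt (fun _ _ => measurableSet_Icc.nullMeasurableSet)
      (fun _ _ _ hij => Icc_subset_Icc_right hij) ⟨t + 1, by linarith, measure_ne_top _ _⟩
  have hInter : ⋂ s > t, Icc a s = Icc a t := by
    ext x
    simp only [mem_iInter, mem_Icc]
    exact ⟨fun h => ⟨(h (t + 1) (by linarith)).1, forall_gt_imp_ge_iff_le_of_dense.1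
      fun s hs => (h s hs).2⟩, fun h s hs => ⟨h.1, h.2.trans hs.le⟩⟩
  rw [hInter] at hlim
  rw [ContinuousWithinAt, ← Ioi_insert, nhdsWithin_insert]
  exact tendsto_sup.2 ⟨tendsto_pure_nhds _ _, hlim⟩

/-- `κ_ω([0,t])`, replaced by `1` from time `T` on so that `ρ_T ≡ 1` holds everywhere rather than
only `P`-a.e. -/
def kernelCdfProcess (κ : Kernel Ω ℝ) (T : ℝ) : ℝ → Ω → ℝ :=
  fun t ω => if t < T then (κ ω (Icc 0 t)).toReal else 1

section KernelCdfProcess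

variable (κ : Kernel Ω ℝ) (T : ℝ)

lemma kernelCdfProcess_mem_Icc [IsMarkovKernel κ] (t : ℝ) (ω : Ω) :
    kernelCdfProcess κ T t ω ∈ Icc (0 : ℝ) 1 := by
  unfold kernelCdfProcess
  split_ifs
  · exact ⟨ENNReal.toReal_nonneg,
      ENNReal.toReal_le_of_le_ofReal zero_le_one (by simp [prob_le_one])⟩
  · simp

lemma monotone_kernelCdfProcess [IsMarkovKernel κ] (ω : Ω) :
    Monotone fun t => kernelCdfProcess κ T t ω := by
  intro s t hst
  by_cases ht : t < T
  · simp only [kernelCdfProcess, ht, hst.trans_lt ht, if_true]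
    exact ENNReal.toReal_mono (measure_ne_top _ _) (measure_mono (Icc_subset_Icc_right hst))
  · simp only [kernelCdfProcess, ht, if_false]
    exact (kernelCdfProcess_mem_Icc κ T s ω).2

lemma continuousWithinAt_kernelCdfProcess [IsFiniteKernel κ] (ω : Ω) {t : ℝ} (ht : t < T) :
    ContinuousWithinAt (fun s => kernelCdfProcess κ T s ω) (Ici t) t := by
  have hcdf : ContinuousWithinAt (fun s => (κ ω (Icc 0 s)).toReal) (Ici t) t :=
    (ENNReal.tendsto_toReal (measure_ne_top _ _)).comp (continuousWithinAt_measure_Icc (κ ω) 0 t)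
  refine hcdf.congr_of_eventuallyEq ?_ (if_pos ht)
  filter_upwards [nhdsWithin_le_nhds (Iio_mem_nhds ht)] with s hs
  exact if_pos hs

lemma kernelCdfProcess_ae_eq [IsFiniteKernel κ] {P : Measure Ω}
    (hmass : ∀ᵐ ω ∂P, κ ω (Icc 0 T) = 1) {t : ℝ} (ht : t ≤ T) :
    (fun ω => ENNReal.ofReal (kernelCdfProcess κ T t ω)) =ᵐ[P] fun ω => κ ω (Icc 0 t) := by
  rcases ht.lt_or_eq with ht | rfl
  · exact .of_forall fun ω => by
      simp [kernelCdfProcess, ht, ENNReal.ofReal_toReal (measure_ne_top _ _)]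
  · filter_upwards [hmass] with ω hω
    simp [kernelCdfProcess, hω]

lemma isRandomizedST_kernelCdfProcess [IsMarkovKernel κ] {P : Measure Ω}
    {F : ℝ → MeasurableSpace Ω} (hUC : UsualConditions P F T)
    (hmass : ∀ᵐ ω ∂P, κ ω (Icc 0 T) = 1)
    (hadapted : ∀ t ∈ Icc (0 : ℝ) T, ∃ g : Ω → ENNReal,
      Measurable[F t] g ∧ g =ᵐ[P] fun ω => κ ω (Icc 0 t)) :
    IsRandomizedST F T (kernelCdfProcess κ T) := by
  refine ⟨fun t ht => ?_, fun t _ => kernelCdfProcess_mem_Icc κ T t,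
    fun ω => (monotone_kernelCdfProcess κ T ω).monotoneOn _,
    fun ω t ht => (continuousWithinAt_kernelCdfProcess κ T ω ht.2).mono Icc_subset_Ici_self,
    fun ω => if_neg (lt_irrefl T)⟩
  obtain ⟨g, hg, hgκ⟩ := hadapted t ht
  refine hUC.measurable_of_ae_eq ht.1 (ENNReal.measurable_toReal.comp hg) ?_
  filter_upwards [kernelCdfProcess_ae_eq κ T hmass ht.2, hgκ] with ω hρ hgω
  rw [Function.comp_apply, hgω, ← hρ, ENNReal.toReal_ofReal (kernelCdfProcess_mem_Icc κ T t ω).1]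

end KernelCdfProcess

lemma secMeas_compProd (P : Measure Ω) [SFinite P] (κ : Kernel Ω ℝ) [IsSFiniteKernel κ]
    (t : ℝ) : secMeas (P ⊗ₘ κ) t = P.withDensity fun ω => κ ω (Icc 0 t) := by
  ext A hA
  have hpre : Prod.fst ⁻¹' A ∩ univ ×ˢ Icc 0 t = A ×ˢ Icc (0 : ℝ) t := by
    ext p; simp [and_comm]
  rw [secMeas, Measure.map_apply measurable_fst hA, Measure.restrict_apply (measurable_fst hA),
    withDensity_apply _ hA, hpre, Measure.compProd_apply_prod hA measurableSet_Icc]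

lemma ae_kernel_apply_eq_one_of_compProd_compl (P : Measure Ω) [SFinite P] (κ : Kernel Ω ℝ)
    [IsMarkovKernel κ] {S : Set ℝ} (hS : MeasurableSet S)
    (hS0 : (P ⊗ₘ κ) {p : Ω × ℝ | p.2 ∈ S}ᶜ = 0) : ∀ᵐ ω ∂P, κ ω S = 1 := by
  have hset : {p : Ω × ℝ | p.2 ∈ S}ᶜ = univ ×ˢ Sᶜ := by
    ext p; simp
  rw [hset, Measure.compProd_apply_prod MeasurableSet.univ hS.compl, Measure.restrict_univ,
    lintegral_eq_zero_iff (κ.measurable_coe hS.compl)] at hS0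
  filter_upwards [hS0] with ω hω
  exact (prob_compl_eq_zero_iff hS).1 hω

theorem stmt8_general (P : Measure Ω) [IsProbabilityMeasure P]
    (F : ℝ → MeasurableSpace Ω) (T : ℝ)
    (hUC : UsualConditions P F T)
    (δ : Measure (Ω × ℝ)) (hδ : IsDistST P F T δ) :
    ∃ ρ : ℝ → Ω → ℝ, IsRandomizedST F T ρ ∧ IsRandDist P T ρ δ := by
  obtain ⟨hδprob, hfst, hconc, hversion⟩ := hδ
  obtain ⟨κ, hκ, rfl⟩ : ∃ κ : Kernel Ω ℝ, IsMarkovKernel κ ∧ P ⊗ₘ κ = δ :=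
    ⟨δ.condKernel, inferInstance, by rw [← hfst]; exact δ.disintegrate _⟩
  have hmass : ∀ᵐ ω ∂P, κ ω (Icc 0 T) = 1 :=
    ae_kernel_apply_eq_one_of_compProd_compl P κ measurableSet_Icc hconc
  have hadapted : ∀ t ∈ Icc (0 : ℝ) T, ∃ g : Ω → ENNReal,
      Measurable[F t] g ∧ g =ᵐ[P] fun ω => κ ω (Icc 0 t) := by
    intro t ht
    obtain ⟨g, hg, hgae⟩ := hversion t ht
    rw [secMeas_compProd] at hgae
    exact ⟨g, hg, hgae.trans (P.rnDeriv_withDensity (κ.measurable_coe measurableSet_Icc))⟩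
  refine ⟨kernelCdfProcess κ T, isRandomizedST_kernelCdfProcess κ T hUC hmass hadapted,
    fun A hA t ht => ?_⟩
  rw [Measure.compProd_apply_prod hA measurableSet_Icc]
  exact setLIntegral_congr_fun_ae hA
    ((kernelCdfProcess_ae_eq κ T hmass ht.2).mono fun ω hω _ => hω.symm)

/-- Every distribution stopping time is equivalent to some randomized stopping
time: there is a randomized stopping time `ρ` with `δ_ρ = δ`. -/
theorem stmt8 (P : Measure Ω) [IsProbabilityMeasure P]
    (F : ℝ → MeasurableSpace Ω) (T : ℝ) (hT : 0 ≤ T)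
    (hUC : UsualConditions P F T)
    (δ : Measure (Ω × ℝ)) (hδ : IsDistST P F T δ) :
    ∃ ρ : ℝ → Ω → ℝ, IsRandomizedST F T ρ ∧ IsRandDist P T ρ δ :=
  stmt8_general P F T hUC δ hδ

end StopEquiv
end
end

section
/- Suppose the filtration satisfies the usual conditions. Then every distribution stopping time δ is equivalent to a unique (up to indistinguishability) randomized stopping time and to at least one mixed stopping time; i.e., there exist a randomized stopping time ρ and a mixed stopping time μ with δ_ρ = δ_μ = δ, and ρ is unique up to indistinguishability. -/
/-!
For each time `q` pick an `F_q`-measurable version `g_q` of `dδ^q/dP`. Replacing `g_q`, for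
rational `q < T`, by `min 1 (sup_{q' ≤ q} g_{q'})` (and by `1` for `q ≥ T`) makes it nondecreasing
in `q` for every `ω` while changing it only on a null set. Then `ρ_t = inf_{q > t} g_q` has
nondecreasing right-continuous paths, is `F_{t+} = F_t`-measurable, and continuity of `δ` from
above gives `ρ_t = dδ^t/dP` a.e., i.e. `δ_ρ = δ`. Two right-continuous processes that agree a.s.
at every rational time are indistinguishable, which gives uniqueness. Finally the generalized
inverse `μ(ω, r) = inf {t : ρ_t(ω) ≥ r}` satisfies `{μ ≤ t} = {r ≤ ρ_t} ∪ {r > 1}`, so `δ_μ` and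
`δ` agree on the rectangles `A × [0, t]`, which determine a measure carried by `Ω × [0, T]`.
-/

open MeasureTheory Set

noncomputable section

namespace StopEquiv

variable {Ω : Type*} [MeasurableSpace Ω]

open Filter Topology
open scoped ENNReal

theorem continuousWithinAt_iInf_rat_gt {α : Type*} [CompleteLinearOrder α] [TopologicalSpace α]
    [OrderTopology α] (H : ℚ → α) (t : ℝ) :
    ContinuousWithinAt (fun s : ℝ => ⨅ (q : ℚ) (_ : s < q), H q) (Ici t) t := by
  refine tendsto_order.2 ⟨fun a ha => ?_, fun b hb => ?_⟩
  · filter_upwards [self_mem_nhdsWithin] with s hs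
    exact ha.trans_le (biInf_mono fun q hq => lt_of_le_of_lt hs hq)
  · obtain ⟨q, hq, hqb⟩ : ∃ q : ℚ, t < q ∧ H q < b := by simpa [iInf_lt_iff] using hb
    filter_upwards [Ico_mem_nhdsGE hq] with s hs
    exact (biInf_le H hs.2).trans_lt hqb

theorem iInf_rat_gt_eq_iInf_rat_mem_Ioo {α : Type*} [CompleteLattice α] {H : ℚ → α}
    (hH : Monotone H) {t s : ℝ} (hts : t < s) :
    ⨅ (q : ℚ) (_ : t < q), H q = ⨅ (q : ℚ) (_ : (q : ℝ) ∈ Ioo t s), H q := by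
  refine le_antisymm (biInf_mono fun q hq => hq.1) (le_iInf₂ fun q hq => ?_)
  obtain ⟨q', hq', hq's⟩ := exists_rat_btwn (lt_min hq hts)
  exact iInf₂_le_of_le q' ⟨hq', hq's.trans_le (min_le_right _ _)⟩
    (hH (by exact_mod_cast (hq's.trans_le (min_le_left _ _)).le))

theorem ae_forall_Icc_eq_of_continuousWithinAt {P : Measure Ω} {T : ℝ} {X Y : ℝ → Ω → ℝ}
    (hX : ∀ ω, ∀ t ∈ Ico (0 : ℝ) T, ContinuousWithinAt (fun s => X s ω) (Icc t T) t)
    (hY : ∀ ω, ∀ t ∈ Ico (0 : ℝ) T, ContinuousWithinAt (fun s => Y s ω) (Icc t T) t)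
    (hXY : ∀ t ∈ Icc (0 : ℝ) T, X t =ᵐ[P] Y t) :
    ∀ᵐ ω ∂P, ∀ t ∈ Icc (0 : ℝ) T, X t ω = Y t ω := by
  have hrat : ∀ᵐ ω ∂P, ∀ q : ℚ, (q : ℝ) ∈ Icc 0 T → X q ω = Y q ω :=
    ae_all_iff.2 fun q => eventually_imp_distrib_left.2 (hXY q)
  filter_upwards [hrat, eventually_imp_distrib_left.2 (hXY T)] with ω hq hT t ht
  rcases ht.2.eq_or_lt with rfl | htT
  · exact hT ht
  -- the paths are continuous along the rationals in `(t, T)`, which accumulate at `t`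
  set S := Ioo t T ∩ range ((↑) : ℚ → ℝ)
  have hS : S ⊆ Icc t T := fun s hs => Ioo_subset_Icc_self hs.1
  have hcl : t ∈ closure S := closure_minimal (Rat.denseRange_cast.open_subset_closure_inter
    isOpen_Ioo) isClosed_closure (by rw [closure_Ioo htT.ne]; exact left_mem_Icc.2 htT.le)
  have := mem_closure_iff_nhdsWithin_neBot.1 hcl
  refine tendsto_nhds_unique_of_eventuallyEq (((hX ω t ⟨ht.1, htT⟩).mono hS).tendsto)
    (((hY ω t ⟨ht.1, htT⟩).mono hS).tendsto) (eventually_nhdsWithin_of_forall ?_)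
  rintro _ ⟨hs, q, rfl⟩
  exact hq q ⟨ht.1.trans hs.1.le, hs.2.le⟩

theorem measure_prod_Iic_eq_prod_Icc {α : Type*} [MeasurableSpace α] {μ : Measure (α × ℝ)}
    {T : ℝ} (hμ : μ {p | p.2 ∈ Icc 0 T}ᶜ = 0) (A : Set α) (t : ℝ) :
    μ (A ×ˢ Iic t) = μ (A ×ˢ Icc 0 (min t T)) := by
  rw [← measure_inter_conull hμ]
  congr 1
  ext p
  simp only [mem_inter_iff, mem_prod, mem_Iic, mem_ofPred_eq, mem_Icc, le_min_iff]
  tauto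

theorem _root_.MeasureTheory.Measure.map_snd_restrict_prod_univ_apply {α : Type*}
    [MeasurableSpace α] (μ : Measure (α × ℝ)) (A : Set α) {B : Set ℝ} (hB : MeasurableSet B) :
    (μ.restrict (A ×ˢ univ)).map Prod.snd B = μ (A ×ˢ B) := by
  rw [Measure.map_apply measurable_snd hB, Measure.restrict_apply (measurable_snd hB)]
  congr 1
  ext p
  simp [and_comm]

theorem _root_.MeasureTheory.Measure.ext_of_prod_Icc {α : Type*} [MeasurableSpace α]
    {μ ν : Measure (α × ℝ)} [IsFiniteMeasure μ] {T : ℝ} (hμ : μ {p | p.2 ∈ Icc 0 T}ᶜ = 0)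
    (hν : ν {p | p.2 ∈ Icc 0 T}ᶜ = 0)
    (h : ∀ A, MeasurableSet A → ∀ t ∈ Icc 0 T, μ (A ×ˢ Icc 0 t) = ν (A ×ˢ Icc 0 t)) :
    μ = ν := by
  refine Measure.ext_prod fun {A B} hA hB => ?_
  rw [← Measure.map_snd_restrict_prod_univ_apply μ A hB,
    ← Measure.map_snd_restrict_prod_univ_apply ν A hB]
  congr 1
  refine Measure.ext_of_Iic _ _ fun t => ?_
  rw [Measure.map_snd_restrict_prod_univ_apply μ A measurableSet_Iic,
    Measure.map_snd_restrict_prod_univ_apply ν A measurableSet_Iic,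
    measure_prod_Iic_eq_prod_Icc hμ, measure_prod_Iic_eq_prod_Icc hν]
  rcases lt_or_ge (min t T) 0 with ht | ht
  · simp [Icc_eq_empty_of_lt ht]
  · exact h A hA _ ⟨ht, min_le_right t T⟩

theorem tendsto_measure_prod_Icc_nhdsGT {α : Type*} [MeasurableSpace α] (μ : Measure (α × ℝ))
    [IsFiniteMeasure μ] {A : Set α} (hA : MeasurableSet A) (t : ℝ) :
    Tendsto (fun s => μ (A ×ˢ Icc 0 s)) (𝓝[>] t) (𝓝 (μ (A ×ˢ Icc 0 t))) := by
  have hinter : ⋂ s > t, A ×ˢ Icc 0 s = A ×ˢ Icc (0 : ℝ) t := by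
    ext p
    simp only [mem_iInter, mem_prod, mem_Icc]
    refine ⟨fun h => ?_, fun h s hs => ⟨h.1, h.2.1, h.2.2.trans hs.le⟩⟩
    obtain ⟨hpA, hp0, -⟩ := h (t + 1) (lt_add_one t)
    exact ⟨hpA, hp0, le_of_forall_gt_imp_ge_of_dense fun s hs => (h s hs).2.2⟩
  rw [← hinter]
  exact tendsto_measure_biInter_gt (fun _ _ => (hA.prod measurableSet_Icc).nullMeasurableSet)
    (fun _ _ _ hij => prod_mono_right (Icc_subset_Icc le_rfl hij))
    ⟨t + 1, lt_add_one t, measure_ne_top μ _⟩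

theorem measurableSet_snd_le_or_one_lt {α : Type*} {m : MeasurableSpace α} {f : α → ℝ}
    (hf : Measurable[m] f) :
    MeasurableSet[m.prod (borel ℝ)] ({p : α × ℝ | p.2 ≤ f p.1} ∪ Prod.snd ⁻¹' Ioi 1) :=
  (measurableSet_le measurable_snd (hf.comp measurable_fst)).union
    (measurable_snd measurableSet_Ioi)

instance inst_s9 : IsProbabilityMeasure lam :=
  ⟨by rw [lam, Measure.restrict_apply_univ, Real.volume_Icc, sub_zero, ENNReal.ofReal_one]⟩

theorem lam_Iic_union_Ioi {x : ℝ} (hx : x ∈ Icc (0 : ℝ) 1) :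
    lam (Iic x ∪ Ioi 1) = ENNReal.ofReal x := by
  have : (Iic x ∪ Ioi 1) ∩ Icc 0 1 = Icc 0 x := by
    ext r
    simp only [mem_inter_iff, mem_union, mem_Iic, mem_Ioi, mem_Icc]
    constructor
    · rintro ⟨h | h, h0, h1⟩
      exacts [⟨h0, h⟩, absurd h1 (not_le.2 h)]
    · rintro ⟨h0, h⟩
      exact ⟨Or.inl h, h0, h.trans hx.2⟩
  rw [lam, Measure.restrict_apply (measurableSet_Iic.union measurableSet_Ioi), this,
    Real.volume_Icc, sub_zero]

theorem secMeas_apply (δ : Measure (Ω × ℝ)) (t : ℝ) {A : Set Ω} (hA : MeasurableSet A) :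
    secMeas δ t A = δ (A ×ˢ Icc 0 t) := by
  rw [secMeas, Measure.map_apply measurable_fst hA,
    Measure.restrict_apply (measurable_fst hA)]
  congr 1
  ext p
  simp [and_comm]

namespace IsDistST

variable {P : Measure Ω} {F : ℝ → MeasurableSpace Ω} {T : ℝ} {δ : Measure (Ω × ℝ)}

theorem measure_prod_Icc_T (hδ : IsDistST P F T δ) {A : Set Ω} (hA : MeasurableSet A) :
    δ (A ×ˢ Icc 0 T) = P A := by
  rw [← hδ.2.1, Measure.map_apply measurable_fst hA,
    ← measure_inter_conull (s := Prod.fst ⁻¹' A) hδ.2.2.1]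
  congr 1

theorem secMeas_le (hδ : IsDistST P F T δ) (t : ℝ) : secMeas δ t ≤ P := by
  refine Measure.le_iff.2 fun A hA => ?_
  rw [secMeas_apply δ t hA, ← hδ.2.1, Measure.map_apply measurable_fst hA]
  exact measure_mono fun p hp => hp.1

variable [IsFiniteMeasure P]

theorem setLIntegral_rnDeriv (hδ : IsDistST P F T δ) (t : ℝ) {A : Set Ω}
    (hA : MeasurableSet A) :
    ∫⁻ ω in A, (secMeas δ t).rnDeriv P ω ∂P = δ (A ×ˢ Icc 0 t) := by
  have : IsFiniteMeasure (secMeas δ t) := isFiniteMeasure_of_le P (hδ.secMeas_le t)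
  rw [Measure.setLIntegral_rnDeriv' (Measure.absolutelyContinuous_of_le (hδ.secMeas_le t)) hA,
    secMeas_apply δ t hA]

theorem rnDeriv_le_one (hδ : IsDistST P F T δ) (t : ℝ) :
    (secMeas δ t).rnDeriv P ≤ᵐ[P] 1 :=
  Measure.rnDeriv_le_one_of_le (hδ.secMeas_le t)

theorem rnDeriv_mono (hδ : IsDistST P F T δ) {s t : ℝ} (hst : s ≤ t) :
    (secMeas δ s).rnDeriv P ≤ᵐ[P] (secMeas δ t).rnDeriv P := by
  refine ae_le_of_forall_setLIntegral_le_of_sigmaFinite (Measure.measurable_rnDeriv _ _)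
    fun A hA _ => ?_
  rw [hδ.setLIntegral_rnDeriv s hA, hδ.setLIntegral_rnDeriv t hA]
  exact measure_mono (prod_mono_right (Icc_subset_Icc le_rfl hst))

theorem rnDeriv_T_ae_eq_one (hδ : IsDistST P F T δ) :
    (secMeas δ T).rnDeriv P =ᵐ[P] 1 := by
  have : secMeas δ T = P := Measure.ext fun A hA => by
    rw [secMeas_apply δ T hA, hδ.measure_prod_Icc_T hA]
  rw [this]
  exact Measure.rnDeriv_self P

end IsDistST

section Construction

variable (P : Measure Ω) (F : ℝ → MeasurableSpace Ω) (T : ℝ) (δ : Measure (Ω × ℝ))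

open Classical in
def rnVersion (q : ℝ) : Ω → ℝ≥0∞ :=
  if h : ∃ g : Ω → ℝ≥0∞, Measurable[F q] g ∧ g =ᵐ[P] (secMeas δ q).rnDeriv P then
    h.choose
  else 1

/-- Taking the running supremum over earlier rational times makes the versions monotone in `q`
for every `ω`, so that no exceptional null set has to be removed. -/
def monotoneVersion (q : ℚ) : Ω → ℝ≥0∞ := fun ω =>
  if (q : ℝ) < T then min 1 (⨆ (q' : ℚ) (_ : 0 ≤ q' ∧ q' ≤ q), rnVersion P F δ q' ω) else 1

def rightLimVersion (t : ℝ) (ω : Ω) : ℝ≥0∞ :=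
  ⨅ (q : ℚ) (_ : t < q), monotoneVersion P F T δ q ω

def randomizedOfDist (t : ℝ) (ω : Ω) : ℝ := (rightLimVersion P F T δ t ω).toReal

variable {P F T δ}

theorem measurable_rnVersion (q : ℝ) : Measurable[F q] (rnVersion P F δ q) := by
  rw [rnVersion]
  split_ifs with h
  exacts [h.choose_spec.1, measurable_const]

theorem IsDistST.rnVersion_ae_eq (hδ : IsDistST P F T δ) {q : ℝ} (hq : q ∈ Icc 0 T) :
    rnVersion P F δ q =ᵐ[P] (secMeas δ q).rnDeriv P := by
  rw [rnVersion, dif_pos (hδ.2.2.2 q hq)]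
  exact (hδ.2.2.2 q hq).choose_spec.2

theorem monotoneVersion_le_one (q : ℚ) (ω : Ω) : monotoneVersion P F T δ q ω ≤ 1 := by
  rw [monotoneVersion]
  split_ifs
  exacts [min_le_left _ _, le_rfl]

theorem monotone_monotoneVersion (ω : Ω) : Monotone fun q => monotoneVersion P F T δ q ω := by
  intro q q' hqq'
  by_cases hq' : (q' : ℝ) < T
  · have hq : (q : ℝ) < T := lt_of_le_of_lt (by exact_mod_cast hqq') hq'
    simp only [monotoneVersion, if_pos hq, if_pos hq']
    exact min_le_min_left _ (biSup_mono fun r hr => ⟨hr.1, hr.2.trans hqq'⟩)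
  · simpa [monotoneVersion, if_neg hq'] using monotoneVersion_le_one q ω

theorem measurable_monotoneVersion (hF : ∀ s t : ℝ, s ≤ t → F s ≤ F t) {q : ℚ} {s : ℝ}
    (hqs : (q : ℝ) ≤ s) : Measurable[F s] (monotoneVersion P F T δ q) := by
  unfold monotoneVersion
  split_ifs
  · refine measurable_const.min (Measurable.iSup fun r => Measurable.iSup fun hr => ?_)
    exact (measurable_rnVersion _).mono (hF _ _ ((Rat.cast_le.2 hr.2).trans hqs)) le_rfl
  · exact measurable_const

theorem IsDistST.monotoneVersion_ae_eq (hδ : IsDistST P F T δ) [IsFiniteMeasure P] {q : ℚ}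
    (hq : (q : ℝ) ∈ Ico 0 T) :
    monotoneVersion P F T δ q =ᵐ[P] (secMeas δ q).rnDeriv P := by
  have hle : ∀ᵐ ω ∂P, ∀ r : ℚ, 0 ≤ r ∧ r ≤ q →
      rnVersion P F δ r ω ≤ rnVersion P F δ q ω := by
    refine ae_all_iff.2 fun r => eventually_imp_distrib_left.2 fun hr => ?_
    have hr' : (r : ℝ) ≤ q := by exact_mod_cast hr.2
    filter_upwards [hδ.rnVersion_ae_eq ⟨by exact_mod_cast hr.1, hr'.trans hq.2.le⟩,
      hδ.rnVersion_ae_eq (Ico_subset_Icc_self hq), hδ.rnDeriv_mono hr'] with ω h1 h2 h3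
    rw [h1, h2]
    exact h3
  filter_upwards [hle, hδ.rnVersion_ae_eq (Ico_subset_Icc_self hq), hδ.rnDeriv_le_one q]
    with ω hle hq_eq hone
  have hsup : ⨆ (r : ℚ) (_ : 0 ≤ r ∧ r ≤ q), rnVersion P F δ r ω = rnVersion P F δ q ω :=
    le_antisymm (iSup₂_le hle) (le_iSup₂_of_le q ⟨by exact_mod_cast hq.1, le_rfl⟩ le_rfl)
  simp only [monotoneVersion, if_pos hq.2, hsup, hq_eq]
  exact min_eq_right hone

theorem rightLimVersion_le_one (t : ℝ) (ω : Ω) : rightLimVersion P F T δ t ω ≤ 1 := by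
  obtain ⟨q, hq⟩ := exists_rat_gt t
  exact (biInf_le (fun q : ℚ => monotoneVersion P F T δ q ω) hq).trans
    (monotoneVersion_le_one q ω)

theorem rightLimVersion_ne_top (t : ℝ) (ω : Ω) : rightLimVersion P F T δ t ω ≠ ⊤ :=
  ne_top_of_le_ne_top ENNReal.one_ne_top (rightLimVersion_le_one t ω)

theorem rightLimVersion_of_le {t : ℝ} (ht : T ≤ t) (ω : Ω) :
    rightLimVersion P F T δ t ω = 1 :=
  le_antisymm (rightLimVersion_le_one t ω) (le_iInf₂ fun q hq => by
    rw [monotoneVersion, if_neg (not_lt.2 (ht.trans hq.le))])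

theorem monotone_rightLimVersion (ω : Ω) : Monotone fun t => rightLimVersion P F T δ t ω :=
  fun _ _ hst => biInf_mono fun _ hq => hst.trans_lt hq

theorem continuousWithinAt_rightLimVersion (ω : Ω) (t : ℝ) :
    ContinuousWithinAt (fun s => rightLimVersion P F T δ s ω) (Ici t) t :=
  continuousWithinAt_iInf_rat_gt (fun q => monotoneVersion P F T δ q ω) t

theorem measurable_rightLimVersion (hUC : UsualConditions P F T) {t : ℝ} (ht : t ∈ Icc 0 T) :
    Measurable[F t] (rightLimVersion P F T δ t) := by
  rcases ht.2.eq_or_lt with htT | htT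
  · rw [show rightLimVersion P F T δ t = fun _ => 1 from
      funext (rightLimVersion_of_le htT.ge)]
    exact measurable_const
  rw [measurable_iff_comap_le, hUC.2.2.1 t ⟨ht.1, htT⟩]
  refine le_iInf₂ fun s hs => measurable_iff_comap_le.1 ?_
  have hR : rightLimVersion P F T δ t =
      fun ω => ⨅ (q : ℚ) (_ : (q : ℝ) ∈ Ioo t s), monotoneVersion P F T δ q ω :=
    funext fun ω => iInf_rat_gt_eq_iInf_rat_mem_Ioo (monotone_monotoneVersion ω) hs.1
  rw [hR]
  exact Measurable.iInf fun q => Measurable.iInf fun hq =>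
    measurable_monotoneVersion hUC.1 hq.2.le

variable [IsFiniteMeasure P]

theorem IsDistST.rnDeriv_le_monotoneVersion (hδ : IsDistST P F T δ) {t : ℝ} (ht : 0 ≤ t)
    {q : ℚ} (htq : t < q) : (secMeas δ t).rnDeriv P ≤ᵐ[P] monotoneVersion P F T δ q := by
  by_cases hqT : (q : ℝ) < T
  · filter_upwards [hδ.monotoneVersion_ae_eq ⟨ht.trans htq.le, hqT⟩, hδ.rnDeriv_mono htq.le]
      with ω h1 h2
    rw [h1]
    exact h2
  · filter_upwards [hδ.rnDeriv_le_one t] with ω h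
    simpa [monotoneVersion, if_neg hqT] using h

theorem IsDistST.lintegral_rightLimVersion_le (hδ : IsDistST P F T δ) {t s : ℝ} (hts : t < s)
    (hsT : s < T) (ht : 0 ≤ t) :
    ∫⁻ ω, rightLimVersion P F T δ t ω ∂P ≤ δ (univ ×ˢ Icc 0 s) := by
  obtain ⟨q, htq, hqs⟩ := exists_rat_btwn hts
  calc ∫⁻ ω, rightLimVersion P F T δ t ω ∂P
      ≤ ∫⁻ ω, monotoneVersion P F T δ q ω ∂P :=
        lintegral_mono fun ω => biInf_le (fun q : ℚ => monotoneVersion P F T δ q ω) htq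
    _ = ∫⁻ ω, (secMeas δ q).rnDeriv P ω ∂P :=
        lintegral_congr_ae (hδ.monotoneVersion_ae_eq ⟨ht.trans htq.le, hqs.trans hsT⟩)
    _ = δ (univ ×ˢ Icc 0 (q : ℝ)) := by
        rw [← setLIntegral_univ, hδ.setLIntegral_rnDeriv q MeasurableSet.univ]
    _ ≤ δ (univ ×ˢ Icc 0 s) := measure_mono (prod_mono_right (Icc_subset_Icc le_rfl hqs.le))

theorem IsDistST.rightLimVersion_ae_eq (hδ : IsDistST P F T δ) (hUC : UsualConditions P F T)
    {t : ℝ} (ht : t ∈ Icc 0 T) :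
    rightLimVersion P F T δ t =ᵐ[P] (secMeas δ t).rnDeriv P := by
  rcases ht.2.eq_or_lt with htT | htT
  · subst htT
    filter_upwards [hδ.rnDeriv_T_ae_eq_one] with ω h
    rw [h, rightLimVersion_of_le le_rfl, Pi.one_apply]
  have : IsProbabilityMeasure δ := hδ.1
  have hge : (secMeas δ t).rnDeriv P ≤ᵐ[P] rightLimVersion P F T δ t := by
    filter_upwards [ae_all_iff.2 fun q : ℚ => eventually_imp_distrib_left.2
      fun htq : t < q => hδ.rnDeriv_le_monotoneVersion ht.1 htq] with ω h
    exact le_iInf₂ h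
  have hle : ∫⁻ ω, rightLimVersion P F T δ t ω ∂P ≤ ∫⁻ ω, (secMeas δ t).rnDeriv P ω ∂P := by
    rw [← setLIntegral_univ (fun ω => (secMeas δ t).rnDeriv P ω),
      hδ.setLIntegral_rnDeriv t MeasurableSet.univ]
    refine ge_of_tendsto (tendsto_measure_prod_Icc_nhdsGT δ MeasurableSet.univ t) ?_
    filter_upwards [Ioo_mem_nhdsGT htT] with s hs
    exact hδ.lintegral_rightLimVersion_le hs.1 hs.2 ht.1
  refine (ae_eq_of_ae_le_of_lintegral_le hge ?_
    ((measurable_rightLimVersion hUC ht).mono (hUC.2.1 t) le_rfl).aemeasurable hle).symm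
  rw [← setLIntegral_univ, hδ.setLIntegral_rnDeriv t MeasurableSet.univ]
  exact measure_ne_top δ _

end Construction

section RandomizedOfDist

variable {P : Measure Ω} {F : ℝ → MeasurableSpace Ω} {T : ℝ} {δ : Measure (Ω × ℝ)}

theorem isRandomizedST_randomizedOfDist (hUC : UsualConditions P F T) :
    IsRandomizedST F T (randomizedOfDist P F T δ) := by
  refine ⟨fun t ht => ENNReal.measurable_toReal.comp (measurable_rightLimVersion hUC ht),
    fun t _ ω => ⟨ENNReal.toReal_nonneg, ?_⟩,
    fun ω => Monotone.monotoneOn (fun s t hst => ?_) _,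
    fun ω t _ => ?_, fun ω => by simp [randomizedOfDist, rightLimVersion_of_le le_rfl]⟩
  · exact ENNReal.toReal_le_of_le_ofReal zero_le_one
      (by simpa using rightLimVersion_le_one t ω)
  · exact ENNReal.toReal_mono (rightLimVersion_ne_top t ω) (monotone_rightLimVersion ω hst)
  · exact (ContinuousAt.comp_continuousWithinAt (f := fun s => rightLimVersion P F T δ s ω)
      (ENNReal.continuousAt_toReal (rightLimVersion_ne_top t ω))
      (continuousWithinAt_rightLimVersion ω t)).mono Icc_subset_Ici_self

theorem IsDistST.isRandDist_randomizedOfDist [IsFiniteMeasure P] (hδ : IsDistST P F T δ)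
    (hUC : UsualConditions P F T) : IsRandDist P T (randomizedOfDist P F T δ) δ := by
  intro A hA t ht
  simp_rw [randomizedOfDist, ENNReal.ofReal_toReal (rightLimVersion_ne_top _ _)]
  rw [← hδ.setLIntegral_rnDeriv t hA]
  exact lintegral_congr_ae (ae_restrict_of_ae (hδ.rightLimVersion_ae_eq hUC ht).symm)

end RandomizedOfDist

namespace IsRandDist

variable {P : Measure Ω} {F : ℝ → MeasurableSpace Ω} {T : ℝ} {δ : Measure (Ω × ℝ)}
  {ρ ρ' : ℝ → Ω → ℝ}

theorem ae_eq [SigmaFinite P] (h : IsRandDist P T ρ δ) (h' : IsRandDist P T ρ' δ)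
    (hρ : IsRandomizedST F T ρ) (hρ' : IsRandomizedST F T ρ')
    (hF : ∀ t, F t ≤ (inferInstance : MeasurableSpace Ω)) {t : ℝ} (ht : t ∈ Icc 0 T) :
    ρ t =ᵐ[P] ρ' t := by
  have hofReal : (fun ω => ENNReal.ofReal (ρ t ω)) =ᵐ[P] fun ω => ENNReal.ofReal (ρ' t ω) :=
    ae_eq_of_forall_setLIntegral_eq_of_sigmaFinite
      (((hρ.1 t ht).mono (hF t) le_rfl).ennreal_ofReal)
      (((hρ'.1 t ht).mono (hF t) le_rfl).ennreal_ofReal)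
      fun A hA _ => (h A hA t ht).symm.trans (h' A hA t ht)
  filter_upwards [hofReal] with ω hω
  exact (ENNReal.ofReal_eq_ofReal_iff (hρ.2.1 t ht ω).1 (hρ'.2.1 t ht ω).1).1 hω

theorem indistinguishable [SigmaFinite P] (h : IsRandDist P T ρ δ) (h' : IsRandDist P T ρ' δ)
    (hρ : IsRandomizedST F T ρ) (hρ' : IsRandomizedST F T ρ')
    (hF : ∀ t, F t ≤ (inferInstance : MeasurableSpace Ω)) :
    ∀ᵐ ω ∂P, ∀ t ∈ Icc (0 : ℝ) T, ρ t ω = ρ' t ω :=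
  ae_forall_Icc_eq_of_continuousWithinAt hρ.2.2.2.1 hρ'.2.2.2.1
    fun _ ht => h.ae_eq h' hρ hρ' hF ht

end IsRandDist

section CandidateMixed

variable {α : Type*} {F : ℝ → MeasurableSpace α} {T : ℝ} {ρ : ℝ → α → ℝ}

theorem candidateMixed_mem_Icc (hT : 0 ≤ T) (ρ : ℝ → α → ℝ) (ω : α) (r : ℝ) :
    candidateMixed T ρ ω r ∈ Icc 0 T := by
  rw [candidateMixed]
  rcases eq_empty_or_nonempty {t | t ∈ Icc 0 T ∧ r ≤ ρ t ω} with hS | ⟨s, hs⟩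
  · rw [hS, Real.sInf_empty]
    exact ⟨le_rfl, hT⟩
  · exact ⟨le_csInf ⟨s, hs⟩ fun x hx => hx.1.1,
      (csInf_le ⟨0, fun y hy => hy.1.1⟩ hs).trans hs.1.2⟩

namespace IsRandomizedST

-- the infimum defining `candidateMixed` is attained, by right-continuity of the paths
theorem candidateMixed_mem (hρ : IsRandomizedST F T ρ) (hT : 0 ≤ T) {r : ℝ} (hr : r ≤ 1)
    (ω : α) : candidateMixed T ρ ω r ∈ {t | t ∈ Icc 0 T ∧ r ≤ ρ t ω} := by
  set S := {t | t ∈ Icc 0 T ∧ r ≤ ρ t ω}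
  have hTS : T ∈ S := ⟨right_mem_Icc.2 hT, (hρ.2.2.2.2 ω).symm ▸ hr⟩
  have hbdd : BddBelow S := ⟨0, fun y hy => hy.1.1⟩
  have hmem : sInf S ∈ Icc 0 T := candidateMixed_mem_Icc hT ρ ω r
  refine ⟨hmem, ?_⟩
  rcases hmem.2.eq_or_lt with h | h
  · rw [show candidateMixed T ρ ω r = T from h]
    exact hTS.2
  have hcont : ContinuousWithinAt (fun s => ρ s ω) S (sInf S) :=
    (hρ.2.2.2.1 ω _ ⟨hmem.1, h⟩).mono fun s hs => ⟨csInf_le hbdd hs, hs.1.2⟩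
  exact closure_minimal (image_subset_iff.2 fun s hs => hs.2) isClosed_Ici
    (hcont.mem_closure_image (csInf_mem_closure ⟨T, hTS⟩ hbdd))

theorem candidateMixed_le_iff (hρ : IsRandomizedST F T ρ) (hT : 0 ≤ T) {t : ℝ}
    (ht : t ∈ Icc 0 T) (ω : α) (r : ℝ) :
    candidateMixed T ρ ω r ≤ t ↔ r ≤ ρ t ω ∨ 1 < r := by
  rcases le_or_gt r 1 with hr | hr
  · have hmem := hρ.candidateMixed_mem hT hr ω
    rw [or_iff_left (not_lt.2 hr)]
    exact ⟨fun h => hmem.2.trans (hρ.2.2.1 ω hmem.1 ht h),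
      fun h => csInf_le ⟨0, fun y hy => hy.1.1⟩ ⟨ht, h⟩⟩
  · have hS : {s | s ∈ Icc 0 T ∧ r ≤ ρ s ω} = ∅ :=
      eq_empty_of_forall_notMem fun s hs => (hs.2.trans (hρ.2.1 s hs.1 ω).2).not_gt hr
    change sInf {s | s ∈ Icc 0 T ∧ r ≤ ρ s ω} ≤ t ↔ _
    rw [hS, Real.sInf_empty]
    exact iff_of_true ht.1 (Or.inr hr)

theorem setOf_candidateMixed_le (hρ : IsRandomizedST F T ρ) (hT : 0 ≤ T) {t : ℝ}
    (ht : t ∈ Icc 0 T) :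
    {p : α × ℝ | candidateMixed T ρ p.1 p.2 ≤ t} =
      {p | p.2 ≤ ρ t p.1} ∪ Prod.snd ⁻¹' Ioi 1 := by
  ext p
  exact hρ.candidateMixed_le_iff hT ht p.1 p.2

theorem isMixedST_candidateMixed (hρ : IsRandomizedST F T ρ) (hT : 0 ≤ T) :
    IsMixedST F T (candidateMixed T ρ) :=
  ⟨candidateMixed_mem_Icc hT ρ, fun t ht => by
    rw [hρ.setOf_candidateMixed_le hT ht]
    exact measurableSet_snd_le_or_one_lt (hρ.1 t ht)⟩

end IsRandomizedST

end CandidateMixed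

namespace IsRandomizedST

variable {F : ℝ → MeasurableSpace Ω} {T : ℝ} {ρ : ℝ → Ω → ℝ}

theorem measurable_candidateMixed (hF : ∀ t, F t ≤ (inferInstance : MeasurableSpace Ω))
    (hρ : IsRandomizedST F T ρ) (hT : 0 ≤ T) :
    Measurable fun p : Ω × ℝ => candidateMixed T ρ p.1 p.2 := by
  refine measurable_of_Iic fun x => ?_
  rcases lt_or_ge x 0 with hx | hx
  · convert MeasurableSet.empty
    exact eq_empty_of_forall_notMem fun p hp =>
      (hx.trans_le (candidateMixed_mem_Icc hT ρ p.1 p.2).1).not_ge hp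
  rcases le_or_gt T x with hTx | hxT
  · convert MeasurableSet.univ
    exact eq_univ_of_forall fun p => (candidateMixed_mem_Icc hT ρ p.1 p.2).2.trans hTx
  change MeasurableSet {p : Ω × ℝ | candidateMixed T ρ p.1 p.2 ≤ x}
  rw [hρ.setOf_candidateMixed_le hT ⟨hx, hxT.le⟩]
  exact measurableSet_snd_le_or_one_lt ((hρ.1 x ⟨hx, hxT.le⟩).mono (hF x) le_rfl)

theorem mixedDist_candidateMixed_compl (hF : ∀ t, F t ≤ (inferInstance : MeasurableSpace Ω))
    (P : Measure Ω) (hρ : IsRandomizedST F T ρ) (hT : 0 ≤ T) :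
    mixedDist P (candidateMixed T ρ) {p | p.2 ∈ Icc 0 T}ᶜ = 0 := by
  have hS : MeasurableSet {p : Ω × ℝ | p.2 ∈ Icc 0 T}ᶜ := (measurable_snd measurableSet_Icc).compl
  rw [mixedDist, Measure.map_apply (measurable_fst.prodMk (measurable_candidateMixed hF hρ hT)) hS]
  convert measure_empty (μ := P.prod lam)
  exact eq_empty_of_forall_notMem fun p hp => hp (candidateMixed_mem_Icc hT ρ p.1 p.2)

theorem isRandDist_mixedDist (hF : ∀ t, F t ≤ (inferInstance : MeasurableSpace Ω))
    (P : Measure Ω) [SFinite P] (hρ : IsRandomizedST F T ρ) (hT : 0 ≤ T) :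
    IsRandDist P T ρ (mixedDist P (candidateMixed T ρ)) := by
  intro A hA t ht
  have hpre : (fun p : Ω × ℝ => (p.1, candidateMixed T ρ p.1 p.2)) ⁻¹' (A ×ˢ Icc 0 t) =
      Prod.fst ⁻¹' A ∩ ({p | p.2 ≤ ρ t p.1} ∪ Prod.snd ⁻¹' Ioi 1) := by
    rw [← hρ.setOf_candidateMixed_le hT ht]
    ext p
    simp [(candidateMixed_mem_Icc hT ρ p.1 p.2).1]
  have hsec : ∀ ω, lam (Prod.mk ω ⁻¹' (Prod.fst ⁻¹' A ∩ ({p | p.2 ≤ ρ t p.1} ∪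
      Prod.snd ⁻¹' Ioi 1))) = A.indicator (fun ω => ENNReal.ofReal (ρ t ω)) ω := by
    intro ω
    by_cases hω : ω ∈ A
    · rw [indicator_of_mem hω, ← lam_Iic_union_Ioi (hρ.2.1 t ht ω)]
      congr 1
      ext r
      simp [hω]
    · rw [indicator_of_notMem hω]
      convert measure_empty (μ := lam)
      ext r
      simp [hω]
  rw [mixedDist, Measure.map_apply (measurable_fst.prodMk (measurable_candidateMixed hF hρ hT))
    (hA.prod measurableSet_Icc), hpre, Measure.prod_apply ((measurable_fst hA).inter
      (measurableSet_snd_le_or_one_lt ((hρ.1 t ht).mono (hF t) le_rfl))), lintegral_congr hsec,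
    lintegral_indicator hA]

end IsRandomizedST

/-- Under the usual conditions, every distribution stopping time is equivalent to
a unique (up to indistinguishability) randomized stopping time and to at least
one mixed stopping time. -/
theorem stmt9 (P : Measure Ω) [IsProbabilityMeasure P]
    (F : ℝ → MeasurableSpace Ω) (T : ℝ) (hT : 0 ≤ T)
    (hUC : UsualConditions P F T)
    (δ : Measure (Ω × ℝ)) (hδ : IsDistST P F T δ) :
    (∃ ρ : ℝ → Ω → ℝ, (IsRandomizedST F T ρ ∧ IsRandDist P T ρ δ) ∧
      ∀ ρ' : ℝ → Ω → ℝ, IsRandomizedST F T ρ' → IsRandDist P T ρ' δ →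
        ∀ᵐ ω ∂P, ∀ t ∈ Icc (0:ℝ) T, ρ t ω = ρ' t ω) ∧
    (∃ μ : Ω → ℝ → ℝ, IsMixedST F T μ ∧ mixedDist P μ = δ) := by
  have : IsProbabilityMeasure δ := hδ.1
  set ρ := randomizedOfDist P F T δ
  have hρ : IsRandomizedST F T ρ := isRandomizedST_randomizedOfDist hUC
  have hρδ : IsRandDist P T ρ δ := hδ.isRandDist_randomizedOfDist hUC
  have hρμ : IsRandDist P T ρ (mixedDist P (candidateMixed T ρ)) :=
    hρ.isRandDist_mixedDist hUC.2.1 P hT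
  refine ⟨⟨ρ, ⟨hρ, hρδ⟩, fun ρ' hρ' hρ'δ => hρδ.indistinguishable hρ'δ hρ hρ' hUC.2.1⟩,
    candidateMixed T ρ, hρ.isMixedST_candidateMixed hT, ?_⟩
  refine (Measure.ext_of_prod_Icc hδ.2.2.1 (hρ.mixedDist_candidateMixed_compl hUC.2.1 P hT)
    fun A hA t ht => ?_).symm
  rw [hρδ A hA t ht, hρμ A hA t ht]

end StopEquiv
end
end

section
/- Let δ be a distribution stopping time and ρ the unique randomized stopping time with δ_ρ = δ. Then for every bounded jointly measurable payoff process R = (R_t)_{t∈[0,T]}, E_δ[R_t(ω)] = E_P[∫_0^T R_t(ω) dρ_t(ω)], where the inner integral is the Lebesgue–Stieltjes integral with respect to the nondecreasing path t ↦ ρ_t(ω). -/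
/-! The hypotheses say that `δ` and the composition product `P ⊗ₘ ν` agree on the rectangles
`A × [0,t]` and are both carried by `Ω × [0,T]`. For fixed `A`, the measures `B ↦ δ (A × B)` and
`B ↦ (P ⊗ₘ ν) (A × B)` on `ℝ` are then finite, carried by `[0,T]` and have the same distribution
function, hence coincide; so `δ = P ⊗ₘ ν` and the identity is Fubini's theorem for the
composition product. -/

open MeasureTheory Set

noncomputable section

namespace MeasureTheory.Measure

lemma map_snd_restrict_prod_univ_apply_s11 {α β : Type*} [MeasurableSpace α] [MeasurableSpace β]
    (δ : Measure (α × β)) (A : Set α) {B : Set β} (hB : MeasurableSet B) :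
    (δ.restrict (A ×ˢ univ)).map Prod.snd B = δ (A ×ˢ B) := by
  rw [map_apply measurable_snd hB, restrict_apply (measurable_snd hB)]
  congr 1
  ext p
  simp [and_comm]

theorem ext_of_Icc_zero_of_compl_null {μ ν : Measure ℝ} [IsFiniteMeasure μ] {T : ℝ}
    (hμ : μ (Icc 0 T)ᶜ = 0) (hν : ν (Icc 0 T)ᶜ = 0)
    (h : ∀ t ∈ Icc 0 T, μ (Icc 0 t) = ν (Icc 0 t)) : μ = ν := by
  refine ext_of_Iic μ ν fun a => ?_
  have hIic : Iic a ∩ Icc 0 T = Icc 0 (min a T) := by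
    ext x
    simp only [mem_inter_iff, mem_Iic, mem_Icc, le_min_iff]
    tauto
  rw [← measure_inter_conull hμ, ← measure_inter_conull hν, hIic]
  rcases le_or_gt 0 (min a T) with h0 | h0
  · exact h _ ⟨h0, min_le_right a T⟩
  · simp [Icc_eq_empty_of_lt h0]

theorem ext_prod_Icc_zero_of_compl_null {α : Type*} [MeasurableSpace α]
    {δ δ' : Measure (α × ℝ)} [IsFiniteMeasure δ] {T : ℝ}
    (hδ : δ (univ ×ˢ (Icc 0 T)ᶜ) = 0) (hδ' : δ' (univ ×ˢ (Icc 0 T)ᶜ) = 0)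
    (h : ∀ A, MeasurableSet A → ∀ t ∈ Icc 0 T, δ (A ×ˢ Icc 0 t) = δ' (A ×ˢ Icc 0 t)) :
    δ = δ' := by
  have hrect : ∀ A, MeasurableSet A → ∀ B, MeasurableSet B → δ (A ×ˢ B) = δ' (A ×ˢ B) := by
    intro A hA B hB
    have hsection_null : ∀ δ₀ : Measure (α × ℝ), δ₀ (univ ×ˢ (Icc 0 T)ᶜ) = 0 →
        (δ₀.restrict (A ×ˢ univ)).map Prod.snd (Icc 0 T)ᶜ = 0 := fun δ₀ hδ₀ => by
      rw [map_snd_restrict_prod_univ_apply_s11 _ _ measurableSet_Icc.compl]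
      exact measure_mono_null (Set.prod_mono (subset_univ A) Subset.rfl) hδ₀
    have hsection := ext_of_Icc_zero_of_compl_null (hsection_null δ hδ) (hsection_null δ' hδ')
      fun t ht => by simp only [map_snd_restrict_prod_univ_apply_s11 _ _ measurableSet_Icc, h A hA t ht]
    simpa only [map_snd_restrict_prod_univ_apply_s11 _ _ hB] using congr($hsection B)
  refine ext_of_generate_finite _ generateFrom_prod.symm isPiSystem_prod ?_ ?_
  · rintro _ ⟨A, hA, B, hB, rfl⟩
    exact hrect A hA B hB
  · simpa using hrect univ .univ univ .univ

end MeasureTheory.Measure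

namespace StopEquiv

variable {Ω : Type*} [MeasurableSpace Ω]

theorem stmt11_general (P : Measure Ω) [IsProbabilityMeasure P]
    (F : ℝ → MeasurableSpace Ω) (T : ℝ) (hT : 0 ≤ T)
    (δ : Measure (Ω × ℝ)) (hδ : IsDistST P F T δ)
    (ρ : ℝ → Ω → ℝ) (hρ : IsRandomizedST F T ρ) (hρδ : IsRandDist P T ρ δ)
    (ν : ProbabilityTheory.Kernel Ω ℝ)
    (hν1 : ∀ ω, ∀ t ∈ Icc (0:ℝ) T, ν ω (Icc 0 t) = ENNReal.ofReal (ρ t ω))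
    (hν2 : ∀ ω, ν ω (Icc (0:ℝ) T)ᶜ = 0)
    (R : Ω × ℝ → ℝ) (hR : Measurable R) (C : ℝ) (hbd : ∀ q, |R q| ≤ C) :
    ∫ q, R q ∂δ = ∫ ω, (∫ t, R (ω, t) ∂(ν ω)) ∂P := by
  have : IsProbabilityMeasure δ := hδ.1
  have : ProbabilityTheory.IsMarkovKernel ν := ⟨fun ω => ⟨by
    rw [← measure_inter_conull (s := univ) (hν2 ω), univ_inter, hν1 ω T ⟨hT, le_rfl⟩,
      hρ.2.2.2.2 ω, ENNReal.ofReal_one]⟩⟩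
  have hδ_null : δ (univ ×ˢ (Icc 0 T)ᶜ) = 0 := by
    rw [univ_prod, preimage_compl]
    exact hδ.2.2.1
  have hδ_eq : δ = P.compProd ν := by
    refine Measure.ext_prod_Icc_zero_of_compl_null hδ_null (by
      simp [Measure.compProd_apply_prod .univ measurableSet_Icc.compl, hν2]) fun A hA t ht => ?_
    rw [hρδ A hA t ht, Measure.compProd_apply_prod hA measurableSet_Icc]
    exact setLIntegral_congr_fun hA fun ω _ => (hν1 ω t ht).symm
  have hR_int : Integrable R δ :=
    .of_bound hR.aestronglyMeasurable C (.of_forall hbd)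
  rw [hδ_eq] at hR_int ⊢
  exact Measure.integral_compProd hR_int

/-- If `δ` is a distribution stopping time and `ρ` the randomized stopping time
with `δ_ρ = δ`, then for every bounded measurable payoff process `R`,
`E_δ[R_t(ω)] = E_P[∫_0^T R_t(ω) dρ_t(ω)]`, where the inner Lebesgue–Stieltjes
integral is taken w.r.t. the measure `ν_ω` of the nondecreasing path `t ↦ ρ_t(ω)`
(characterized by `ν_ω([0,t]) = ρ_t(ω)` and `ν_ω([0,T]ᶜ) = 0`). -/
theorem stmt11 (P : Measure Ω) [IsProbabilityMeasure P]
    (F : ℝ → MeasurableSpace Ω) (T : ℝ) (hT : 0 ≤ T)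
    (hUC : UsualConditions P F T)
    (δ : Measure (Ω × ℝ)) (hδ : IsDistST P F T δ)
    (ρ : ℝ → Ω → ℝ) (hρ : IsRandomizedST F T ρ) (hρδ : IsRandDist P T ρ δ)
    (ν : ProbabilityTheory.Kernel Ω ℝ)
    (hν1 : ∀ ω, ∀ t ∈ Icc (0:ℝ) T, ν ω (Icc 0 t) = ENNReal.ofReal (ρ t ω))
    (hν2 : ∀ ω, ν ω (Icc (0:ℝ) T)ᶜ = 0)
    (R : Ω × ℝ → ℝ) (hR : Measurable R) (C : ℝ) (hbd : ∀ q, |R q| ≤ C) :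
    ∫ q, R q ∂δ = ∫ ω, (∫ t, R (ω, t) ∂(ν ω)) ∂P :=
  stmt11_general P F T hT δ hδ ρ hρ hρδ ν hν1 hν2 R hR C hbd
end StopEquiv
end
end
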